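/- arXiv:2008.03281 — 3 statements merged into one kernel-verified Lean document; each statement's English description precedes it below -/
import Mathlib

section
/- For every unit vector ξ ∈ ℝ³ and every vector a ∈ ℝ³, conjugating the cross-product matrix by the orthogonal projection Π_ξ = id − ξξᵀ gives Π_ξ [a]_× Π_ξ = ⟨a, ξ⟩ [ξ]_×. -/
/-- The cross-product matrix `[f]ₓ` of a vector `f ∈ ℝ³`. -/
def crossMatrix (f : Fin 3 → ℝ) : Matrix (Fin 3) (Fin 3) ℝ :=
  !![0, -f 2, f 1; f 2, 0, -f 0; -f 1, f 0, 0]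

/-!
Write `Π = 1 - ξ ξᵀ`. For a unit vector `ξ` the triple product expansion gives
`Π u = -ξ × (ξ × u)`, and for `w ⊥ ξ` it gives `ξ × (a × w) = -⟨a, ξ⟩ w`; hence
`Π (a × w) = ⟨a, ξ⟩ ξ × w`. Applied to `w = Π v`, together with `ξ × Π v = ξ × v`,
this is `Π [a]ₓ Π v = ⟨a, ξ⟩ [ξ]ₓ v` for every `v`.
-/

open Matrix

theorem crossMatrix_mulVec (a v : Fin 3 → ℝ) : crossMatrix a *ᵥ v = a ⨯₃ v := by
  rw [crossMatrix, cross_apply]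
  ext i
  fin_cases i <;>
  · simp only [mulVec, vec3_dotProduct, Fin.isValue, Fin.reduceFinMk, of_apply, cons_val',
      cons_val_fin_one, cons_val, cons_val_zero, cons_val_one]
    ring

section Projection

variable {n R : Type*} [Fintype n] [DecidableEq n] [CommRing R]

theorem one_sub_vecMulVec_mulVec (ξ v : n → R) :
    (1 - vecMulVec ξ ξ) *ᵥ v = v - (ξ ⬝ᵥ v) • ξ := by
  rw [sub_mulVec, one_mulVec, vecMulVec_mulVec, op_smul_eq_smul]

theorem dotProduct_one_sub_vecMulVec_mulVec {ξ : n → R} (hξ : ξ ⬝ᵥ ξ = 1) (v : n → R) :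
    ξ ⬝ᵥ (1 - vecMulVec ξ ξ) *ᵥ v = 0 := by
  rw [one_sub_vecMulVec_mulVec, dotProduct_sub, dotProduct_smul, hξ, smul_eq_mul, mul_one,
    sub_self]

end Projection

section Cross

variable {R : Type*} [CommRing R]

theorem cross_one_sub_vecMulVec_mulVec (ξ v : Fin 3 → R) :
    ξ ⨯₃ ((1 - vecMulVec ξ ξ) *ᵥ v) = ξ ⨯₃ v := by
  rw [one_sub_vecMulVec_mulVec, map_sub, map_smul, cross_self, smul_zero, sub_zero]

theorem one_sub_vecMulVec_mulVec_eq_neg_cross_cross {ξ : Fin 3 → R} (hξ : ξ ⬝ᵥ ξ = 1)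
    (u : Fin 3 → R) : (1 - vecMulVec ξ ξ) *ᵥ u = -(ξ ⨯₃ (ξ ⨯₃ u)) := by
  rw [cross_cross_eq_smul_sub_smul', hξ, one_smul, one_sub_vecMulVec_mulVec, neg_sub]

theorem one_sub_vecMulVec_mulVec_cross {ξ w : Fin 3 → R} (hξ : ξ ⬝ᵥ ξ = 1) (hw : ξ ⬝ᵥ w = 0)
    (a : Fin 3 → R) : (1 - vecMulVec ξ ξ) *ᵥ (a ⨯₃ w) = (a ⬝ᵥ ξ) • (ξ ⨯₃ w) := by
  rw [one_sub_vecMulVec_mulVec_eq_neg_cross_cross hξ, cross_cross_eq_smul_sub_smul' ξ a w, hw,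
    zero_smul, zero_sub, map_neg, map_smul, neg_neg, dotProduct_comm]

end Cross

/-- For a unit vector `ξ` and any `a ∈ ℝ³`, conjugating the cross-product matrix by the
orthogonal projection `Π_ξ = id − ξξᵀ` gives `Π_ξ [a]ₓ Π_ξ = ⟨a,ξ⟩ [ξ]ₓ`. -/
theorem projection_conj_crossMatrix (ξ : Fin 3 → ℝ) (hξ : ∑ i, ξ i * ξ i = 1)
    (a : Fin 3 → ℝ) :
    (1 - Matrix.vecMulVec ξ ξ) * crossMatrix a * (1 - Matrix.vecMulVec ξ ξ)
      = (∑ i, a i * ξ i) • crossMatrix ξ := by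
  have hunit : ξ ⬝ᵥ ξ = 1 := hξ
  change _ = (a ⬝ᵥ ξ) • crossMatrix ξ
  refine ext_iff_mulVec.mpr fun v => ?_
  rw [← mulVec_mulVec, ← mulVec_mulVec, crossMatrix_mulVec,
    one_sub_vecMulVec_mulVec_cross hunit (dotProduct_one_sub_vecMulVec_mulVec hunit v),
    cross_one_sub_vecMulVec_mulVec, smul_mulVec, crossMatrix_mulVec]
end

section
/- Let f : ℝ³ → ℝ³ be a Schwartz vector field, and let [f]_× denote the pointwise cross-product matrix field. Then the transverse ray transform of [f]_× equals the longitudinal ray transform of f times the cross-product matrix of the direction: J([f]_×)(ξ, x) = (If)(ξ, x) · [ξ]_×, where (If)(ξ, x) = ∫_ℝ ⟨f(x + tξ), ξ⟩ dt. -/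
open MeasureTheory

/- As `ξᵀ[a]ξ = 0`, the left side expands to `[a] + (ξ × a)ξᵀ - ξ(ξ × a)ᵀ`; then use
`uvᵀ - vuᵀ = [v × u]` and `ξ × (ξ × a) = ⟨a, ξ⟩ξ - |ξ|²a`. -/
theorem one_sub_vecMulVec_mul_crossMatrix_mul (a ξ : Fin 3 → ℝ) :
    (1 - Matrix.vecMulVec ξ ξ) * crossMatrix a * (1 - Matrix.vecMulVec ξ ξ)
      = (∑ i, a i * ξ i) • crossMatrix ξ + (1 - ∑ i, ξ i * ξ i) • crossMatrix a := by
  ext i j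
  fin_cases i <;> fin_cases j <;>
    simp [crossMatrix, Matrix.mul_apply, Matrix.vecMulVec_apply, Matrix.one_apply,
      Fin.sum_univ_three] <;> ring

theorem one_sub_vecMulVec_mul_crossMatrix_mul_of_sum_mul_self_eq_one (a ξ : Fin 3 → ℝ)
    (hξ : ∑ i, ξ i * ξ i = 1) :
    (1 - Matrix.vecMulVec ξ ξ) * crossMatrix a * (1 - Matrix.vecMulVec ξ ξ)
      = (∑ i, a i * ξ i) • crossMatrix ξ := by
  rw [one_sub_vecMulVec_mul_crossMatrix_mul, hξ, sub_self, zero_smul, add_zero]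

theorem TRT_crossMatrix_eq_LRT_general
    (f : (Fin 3 → ℝ) → (Fin 3 → ℝ))
    (ξ : Fin 3 → ℝ) (hξ : ∑ i, ξ i * ξ i = 1)
    (x : Fin 3 → ℝ) :
    (Matrix.of fun k l => ∫ t : ℝ,
        ((1 - Matrix.vecMulVec ξ ξ) * crossMatrix (f (x + t • ξ)) *
          (1 - Matrix.vecMulVec ξ ξ)) k l)
      = (∫ t : ℝ, ∑ i, f (x + t • ξ) i * ξ i) • crossMatrix ξ := by
  ext k l
  simp only [one_sub_vecMulVec_mul_crossMatrix_mul_of_sum_mul_self_eq_one _ _ hξ, Matrix.of_apply,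
    Matrix.smul_apply, smul_eq_mul]
  exact integral_mul_const _ _

/-- The transverse ray transform of the cross-product matrix field `[f]ₓ` equals the
longitudinal ray transform of `f` times `[ξ]ₓ`:
`J([f]ₓ)(ξ,x) = (If)(ξ,x) · [ξ]ₓ`. -/
theorem TRT_crossMatrix_eq_LRT
    (f : (Fin 3 → ℝ) → (Fin 3 → ℝ))
    (hf : ∀ x ξ i, Integrable (fun t : ℝ => f (x + t • ξ) i))
    (ξ : Fin 3 → ℝ) (hξ : ∑ i, ξ i * ξ i = 1)
    (x : Fin 3 → ℝ) (hx : ∑ i, x i * ξ i = 0) :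
    (Matrix.of fun k l => ∫ t : ℝ,
        ((1 - Matrix.vecMulVec ξ ξ) * crossMatrix (f (x + t • ξ)) *
          (1 - Matrix.vecMulVec ξ ξ)) k l)
      = (∫ t : ℝ, ∑ i, f (x + t • ξ) i * ξ i) • crossMatrix ξ :=
  TRT_crossMatrix_eq_LRT_general f ξ hξ x
end

section
/- Let f : ℝ² → ℝ be even (f(−k) = f(k)) with compact support, and let q_j ∈ ℝ² for j in a finite index set J. Define D(k) = |E_j f(k − q_j)|² (with E_j the average over J). Then the center of mass of D, namely (∫ k D(k) dk)/(∫ D(k) dk), equals E_{j,j'}[(q_j + q_{j'})/2 · F₀(q_j − q_{j'})] / E_{j,j'}[F₀(q_j − q_{j'})] where F₀(c) = ∫ f(k − c/2) f(k + c/2) dk, provided the denominator is nonzero. In particular, if the random variables (q_j + q_{j'})/2 and q_j − q_{j'} over uniformly random pairs (j, j') are independent, then the center of mass equals E_j[q_j]. -/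
/-!
Expanding the square, `D` is the double average of the products `f (k - q j) * f (k - q j')`.
Translating such a product by the midpoint `(q j + q j') / 2` turns it into the even function
`k ↦ f (k - c/2) * f (k + c/2)` with `c = q j - q j'`; its mass is `F₀ c` and its first moment
vanishes by evenness, so the product has first moment `F₀ c • (q j + q j') / 2`. Under the
factorization hypothesis only the average of the midpoints, `E_j q_j`, remains.
-/

open MeasureTheory

theorem integral_eq_zero_of_odd {G F : Type*} [MeasurableSpace G] [AddGroup G] [MeasurableNeg G]
    [NormedAddCommGroup F] [NormedSpace ℝ F] (μ : Measure G) [μ.IsNegInvariant] {g : G → F}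
    (hg : g.Odd) : ∫ x, g x ∂μ = 0 := by
  have h : ∫ x, g x ∂μ = -∫ x, g x ∂μ := calc
    ∫ x, g x ∂μ = ∫ x, g (-x) ∂μ := (integral_neg_eq_self g μ).symm
    _ = -∫ x, g x ∂μ := by simp_rw [hg.eq, integral_neg]
  have h2 : (2 : ℝ) • ∫ x, g x ∂μ = 0 := by
    rw [two_smul]; nth_rw 1 [h]; exact neg_add_cancel _
  exact (smul_eq_zero.mp h2).resolve_left two_ne_zero

theorem sum_sum_midpoint {ι M : Type*} [Fintype ι] [AddCommGroup M] [Module ℝ M] (q : ι → M) :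
    ∑ j, ∑ j', (1/2 : ℝ) • (q j + q j') = (Fintype.card ι : ℝ) • ∑ j, q j := by
  simp only [← Finset.smul_sum, Finset.sum_add_distrib, Finset.sum_const, Finset.card_univ,
    ← Nat.cast_smul_eq_nsmul ℝ]
  module

theorem HasCompactSupport.mul_comp_sub {G R : Type*} [TopologicalSpace G] [AddGroup G]
    [IsTopologicalAddGroup G] [MulZeroClass R] {f : G → R} (hfs : HasCompactSupport f) (a b : G) :
    HasCompactSupport fun k ↦ f (k - a) * f (k - b) :=
  (hfs.comp_homeomorph (Homeomorph.subRight a)).mul_right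

section Overlap

variable {E : Type*} [NormedAddCommGroup E] [NormedSpace ℝ E]

theorem mul_comp_add_midpoint_sub (f : E → ℝ) (a b k : E) :
    f (k + (1/2 : ℝ) • (a + b) - a) * f (k + (1/2 : ℝ) • (a + b) - b)
      = f (k - (1/2 : ℝ) • (a - b)) * f (k + (1/2 : ℝ) • (a - b)) := by
  congr 2 <;> module

variable [MeasurableSpace E]

/-- The function `F₀` of the statement. -/
noncomputable def overlap (μ : Measure E) (f : E → ℝ) (c : E) : ℝ :=
  ∫ k, f (k - (1/2 : ℝ) • c) * f (k + (1/2 : ℝ) • c) ∂μ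

variable {μ : Measure E} {f : E → ℝ}

theorem integral_mul_comp_sub [MeasurableAdd E] [μ.IsAddRightInvariant] (a b : E) :
    ∫ k, f (k - a) * f (k - b) ∂μ = overlap μ f (a - b) := by
  rw [← integral_add_right_eq_self _ ((1/2 : ℝ) • (a + b))]
  simp_rw [mul_comp_add_midpoint_sub, overlap]

variable [BorelSpace E]

theorem integral_mul_comp_sub_smul_self [CompleteSpace E]
    [μ.IsAddRightInvariant] [μ.IsNegInvariant] [IsFiniteMeasureOnCompacts μ]
    (hf : Continuous f) (hfs : HasCompactSupport f) (heven : f.Even) (a b : E) :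
    ∫ k, (f (k - a) * f (k - b)) • k ∂μ = overlap μ f (a - b) • (1/2 : ℝ) • (a + b) := by
  set m : E := (1/2 : ℝ) • (a + b)
  set g : E → ℝ := fun k ↦ f (k - (1/2 : ℝ) • (a - b)) * f (k + (1/2 : ℝ) • (a - b))
  have hg : Continuous g := by fun_prop
  have hgs : HasCompactSupport g :=
    (hfs.comp_homeomorph (Homeomorph.subRight ((1/2 : ℝ) • (a - b)))).mul_right
  have hg_even : g.Even := fun k ↦ by
    simp only [g]
    rw [← heven (k - _), ← heven (k + _), mul_comm]
    congr 2 <;> module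
  have hmoment : ∫ k, g k • k ∂μ = 0 :=
    integral_eq_zero_of_odd μ fun k ↦ by rw [hg_even.eq, smul_neg]
  have hshift : ∀ k, (f (k + m - a) * f (k + m - b)) • (k + m) = g k • k + g k • m := fun k ↦ by
    rw [mul_comp_add_midpoint_sub, smul_add]
  rw [← integral_add_right_eq_self _ m]
  simp_rw [hshift]
  have hint_moment : Integrable (fun k ↦ g k • k) μ :=
    (hg.smul continuous_id).integrable_of_hasCompactSupport hgs.smul_right
  have hint_mass : Integrable (fun k ↦ g k • m) μ :=
    (hg.integrable_of_hasCompactSupport hgs).smul_const m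
  rw [integral_add hint_moment hint_mass, hmoment, zero_add, integral_smul_const]
  rfl

variable {ι : Type*} [Fintype ι]

theorem integral_sq_sum_comp_sub [μ.IsAddRightInvariant]
    [IsFiniteMeasureOnCompacts μ] (hf : Continuous f) (hfs : HasCompactSupport f) (q : ι → E) :
    ∫ k, (∑ j, f (k - q j)) ^ 2 ∂μ = ∑ j, ∑ j', overlap μ f (q j - q j') := by
  have hint (a b : E) : Integrable (fun k ↦ f (k - a) * f (k - b)) μ :=
    (by fun_prop : Continuous _).integrable_of_hasCompactSupport (hfs.mul_comp_sub a b)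
  simp_rw [sq, Finset.sum_mul_sum]
  rw [integral_finsetSum _ fun j _ ↦ integrable_finsetSum _ fun j' _ ↦ hint _ _]
  simp_rw [integral_finsetSum _ fun j' _ ↦ hint _ _, integral_mul_comp_sub]

theorem integral_sq_sum_comp_sub_smul_self [CompleteSpace E]
    [μ.IsAddRightInvariant] [μ.IsNegInvariant] [IsFiniteMeasureOnCompacts μ]
    (hf : Continuous f) (hfs : HasCompactSupport f) (heven : f.Even) (q : ι → E) :
    ∫ k, (∑ j, f (k - q j)) ^ 2 • k ∂μ
      = ∑ j, ∑ j', overlap μ f (q j - q j') • (1/2 : ℝ) • (q j + q j') := by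
  have hint (a b : E) : Integrable (fun k ↦ (f (k - a) * f (k - b)) • k) μ :=
    (by fun_prop : Continuous _).integrable_of_hasCompactSupport (hfs.mul_comp_sub a b).smul_right
  simp_rw [sq, Finset.sum_mul_sum, Finset.sum_smul]
  rw [integral_finsetSum _ fun j _ ↦ integrable_finsetSum _ fun j' _ ↦ hint _ _]
  simp_rw [integral_finsetSum _ fun j' _ ↦ hint _ _,
    integral_mul_comp_sub_smul_self hf hfs heven]

end Overlap

theorem center_of_mass_of_averaged_spots_general
    {n : ℕ}
    (f : (Fin 2 → ℝ) → ℝ) (hcont : Continuous f) (hsupp : HasCompactSupport f)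
    (heven : ∀ k, f (-k) = f k)
    (q : Fin n → (Fin 2 → ℝ))
    (D : (Fin 2 → ℝ) → ℝ)
    (hD : ∀ k, D k = ((n : ℝ)⁻¹ * ∑ j, f (k - q j)) ^ 2)
    (F₀ : (Fin 2 → ℝ) → ℝ)
    (hF₀ : ∀ c, F₀ c = ∫ k : Fin 2 → ℝ, f (k - (1/2 : ℝ) • c) * f (k + (1/2 : ℝ) • c))
    (hden : (((n : ℝ) ^ 2)⁻¹ * ∑ j, ∑ j', F₀ (q j - q j')) ≠ 0) :
    ((∫ k : Fin 2 → ℝ, D k)⁻¹ • ∫ k : Fin 2 → ℝ, D k • k)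
      = (((n : ℝ) ^ 2)⁻¹ * ∑ j, ∑ j', F₀ (q j - q j'))⁻¹ •
          (((n : ℝ) ^ 2)⁻¹ • ∑ j, ∑ j', F₀ (q j - q j') • ((1/2 : ℝ) • (q j + q j'))) ∧
    ((((n : ℝ) ^ 2)⁻¹ • ∑ j, ∑ j', F₀ (q j - q j') • ((1/2 : ℝ) • (q j + q j')))
        = (((n : ℝ) ^ 2)⁻¹ * ∑ j, ∑ j', F₀ (q j - q j')) •
          (((n : ℝ) ^ 2)⁻¹ • ∑ j, ∑ j', (1/2 : ℝ) • (q j + q j')) →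
      ((∫ k : Fin 2 → ℝ, D k)⁻¹ • ∫ k : Fin 2 → ℝ, D k • k)
        = (n : ℝ)⁻¹ • ∑ j, q j) := by
  obtain rfl : F₀ = overlap volume f := funext hF₀
  have hD' : D = fun k ↦ ((n : ℝ) ^ 2)⁻¹ * (∑ j, f (k - q j)) ^ 2 :=
    funext fun k ↦ by rw [hD]; ring
  have hmass : ∫ k, D k = ((n : ℝ) ^ 2)⁻¹ * ∑ j, ∑ j', overlap volume f (q j - q j') := by
    rw [hD', integral_const_mul, integral_sq_sum_comp_sub hcont hsupp]
  have hmoment : ∫ k, D k • k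
      = ((n : ℝ) ^ 2)⁻¹ • ∑ j, ∑ j', overlap volume f (q j - q j') • (1/2 : ℝ) • (q j + q j') := by
    simp_rw [hD', mul_smul]
    rw [integral_smul, integral_sq_sum_comp_sub_smul_self hcont hsupp heven]
  refine ⟨by rw [hmass, hmoment], fun hfactor ↦ ?_⟩
  have hscale : ((n : ℝ) ^ 2)⁻¹ * n = (n : ℝ)⁻¹ := by
    rw [sq, mul_inv, mul_right_comm]
    simpa using mul_inv_mul_cancel (n : ℝ)⁻¹
  rw [hmass, hmoment, hfactor, inv_smul_smul₀ hden, sum_sum_midpoint, Fintype.card_fin, smul_smul,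
    hscale]

/-- Centre of mass of `D(k) = |E_j f(k − q_j)|²` for an even compactly supported `f`:
it equals `E_{j,j'}[(q_j+q_{j'})/2 · F₀(q_j−q_{j'})] / E_{j,j'}[F₀(q_j−q_{j'})]` with
`F₀(c) = ∫ f(k−c/2) f(k+c/2) dk`; if moreover `(q_j+q_{j'})/2` and `F₀(q_j−q_{j'})` are
independent (their averages factorize), the centre of mass is `E_j q_j`. -/
theorem center_of_mass_of_averaged_spots
    {n : ℕ} (hn : 0 < n)
    (f : (Fin 2 → ℝ) → ℝ) (hcont : Continuous f) (hsupp : HasCompactSupport f)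
    (heven : ∀ k, f (-k) = f k)
    (q : Fin n → (Fin 2 → ℝ))
    (D : (Fin 2 → ℝ) → ℝ)
    (hD : ∀ k, D k = ((n : ℝ)⁻¹ * ∑ j, f (k - q j)) ^ 2)
    (F₀ : (Fin 2 → ℝ) → ℝ)
    (hF₀ : ∀ c, F₀ c = ∫ k : Fin 2 → ℝ, f (k - (1/2 : ℝ) • c) * f (k + (1/2 : ℝ) • c))
    (hden : (((n : ℝ) ^ 2)⁻¹ * ∑ j, ∑ j', F₀ (q j - q j')) ≠ 0) :
    ((∫ k : Fin 2 → ℝ, D k)⁻¹ • ∫ k : Fin 2 → ℝ, D k • k)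
      = (((n : ℝ) ^ 2)⁻¹ * ∑ j, ∑ j', F₀ (q j - q j'))⁻¹ •
          (((n : ℝ) ^ 2)⁻¹ • ∑ j, ∑ j', F₀ (q j - q j') • ((1/2 : ℝ) • (q j + q j'))) ∧
    ((((n : ℝ) ^ 2)⁻¹ • ∑ j, ∑ j', F₀ (q j - q j') • ((1/2 : ℝ) • (q j + q j')))
        = (((n : ℝ) ^ 2)⁻¹ * ∑ j, ∑ j', F₀ (q j - q j')) •
          (((n : ℝ) ^ 2)⁻¹ • ∑ j, ∑ j', (1/2 : ℝ) • (q j + q j')) →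
      ((∫ k : Fin 2 → ℝ, D k)⁻¹ • ∫ k : Fin 2 → ℝ, D k • k)
        = (n : ℝ)⁻¹ • ∑ j, q j) :=
  center_of_mass_of_averaged_spots_general f hcont hsupp heven q D hD F₀ hF₀ hden
end
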